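/- arXiv:2605.02298 — 2 statements merged into one kernel-verified Lean document; each statement's English description precedes it below -/
import Mathlib

section
/- Let τ_k ∈ Sym(n_k) satisfy d_□(λ, ĥτ_k) ≤ C·log(n_k)/n_k, and define π_1 = τ_1 and π_k = π_{k−1}[τ_k,…,τ_k] ∈ Sym(N_k) (the inflation of π_{k−1} by N_{k−1} copies of τ_k), where N_k = n_1⋯n_k. Then d_□(ĥπ_k, ĥπ_{k+1}) ≤ 4C·log(n_{k+1})/N_{k+1}. -/
open MeasureTheory Set Filter Topology

/-- Rectangular distance between two measures on the plane: supremum over axis-aligned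
rectangles `[a,b] × [c,d]` of the difference of their measures. -/
noncomputable def dRect (μ ν : Measure (ℝ × ℝ)) : ℝ :=
  ⨆ r : ℝ × ℝ × ℝ × ℝ,
    |(μ (Icc r.1 r.2.1 ×ˢ Icc r.2.2.1 r.2.2.2)).toReal -
      (ν (Icc r.1 r.2.1 ×ˢ Icc r.2.2.1 r.2.2.2)).toReal|

/-- Star discrepancy: supremum over anchored rectangles `[0,x] × [0,y]`. -/
noncomputable def dStar (μ ν : Measure (ℝ × ℝ)) : ℝ :=
  ⨆ r : ℝ × ℝ,
    |(μ (Icc 0 r.1 ×ˢ Icc 0 r.2)).toReal - (ν (Icc 0 r.1 ×ˢ Icc 0 r.2)).toReal|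

/-- A permuton: probability measure on the unit square with uniform marginals. -/
def IsPermuton (μ : Measure (ℝ × ℝ)) : Prop :=
  IsProbabilityMeasure μ ∧ μ.map Prod.fst = volume.restrict (Icc 0 1) ∧
    μ.map Prod.snd = volume.restrict (Icc 0 1)

/-- The permuton associated with a permutation of `{1, …, n}` (0-indexed here):
density `n` on the union of the base squares. -/
noncomputable def hatPerm (n : ℕ) (π : Equiv.Perm (Fin n)) : Measure (ℝ × ℝ) :=
  (n : ENNReal) • volume.restrict (⋃ i : Fin n,
    Icc (((i : ℕ) : ℝ) / n) ((((i : ℕ) : ℝ) + 1) / n) ×ˢ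
      Icc (((π i : ℕ) : ℝ) / n) ((((π i : ℕ) : ℝ) + 1) / n))

/-- Empirical (uniform) measure on a finite indexed point family. -/
noncomputable def empMeasure {n : ℕ} (P : Fin n → ℝ × ℝ) : Measure (ℝ × ℝ) :=
  (n : ENNReal)⁻¹ • ∑ i, Measure.dirac (P i)

/-- The point set `{(i/n, π(i)/n) : i = 1, …, n}` associated with a permutation. -/
noncomputable def permPts (n : ℕ) (π : Equiv.Perm (Fin n)) : Fin n → ℝ × ℝ :=
  fun i => ((((i : ℕ) : ℝ) + 1) / n, (((π i : ℕ) : ℝ) + 1) / n)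

/-- `D_n(μ)`: best rectangular-distance approximation of `μ` by an `n`-permutation. -/
noncomputable def Dn (n : ℕ) (μ : Measure (ℝ × ℝ)) : ℝ :=
  ⨅ π : Equiv.Perm (Fin n), dRect μ (hatPerm n π)

/-- Inflation of a permutation: each point of σ is replaced by a copy of τ. -/
def inflate {m n : ℕ} (σ : Equiv.Perm (Fin m)) (τ : Equiv.Perm (Fin n)) :
    Equiv.Perm (Fin (m * n)) :=
  (Equiv.permCongr finProdFinEquiv) (σ.prodCongr τ)

/-!
Restricted to a base square of `σ`, the measures `hatPerm m σ` and `hatPerm (m * n) (inflate σ τ)`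
are copies of Lebesgue measure `λ` on the unit square and of `hatPerm n τ`, scaled by `1 / m`.
Hence the discrepancy on a rectangle `R` is `(1 / m) ∑ᵢ (λ Rᵢ - hatPerm n τ Rᵢ)`, where `Rᵢ` is `R`
read in the coordinates of the `i`-th base square. A term vanishes unless an edge of `Rᵢ` lies
strictly inside `(0, 1)`: otherwise `Rᵢ` either contains the unit square or meets it in a null
set, and there the two measures agree. Since the base squares of `σ` occupy distinct rows and
columns, each of the four edges of `R` cuts at most one of them, so at most four terms survive,
each bounded by `dRect λ (hatPerm n τ) / m`.
-/

open scoped Finset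

noncomputable def overlap (u v x y : ℝ) : ℝ := max (min y v - max x u) 0

lemma overlap_nonneg (u v x y : ℝ) : 0 ≤ overlap u v x y := le_max_right _ _

lemma overlap_eq_zero_of_le {u v x y : ℝ} (h : min y v ≤ max x u) : overlap u v x y = 0 :=
  max_eq_right (sub_nonpos.2 h)

lemma volume_Icc_prod_inter (u v x y u' v' x' y' : ℝ) :
    volume ((Icc u v ×ˢ Icc u' v') ∩ (Icc x y ×ˢ Icc x' y')) =
      ENNReal.ofReal (overlap u v x y) * ENNReal.ofReal (overlap u' v' x' y') := by
  rw [prod_inter_prod, Icc_inter_Icc, Icc_inter_Icc, Measure.volume_eq_prod,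
    Measure.prod_prod, Real.volume_Icc, Real.volume_Icc, overlap, overlap,
    ENNReal.ofReal_max, ENNReal.ofReal_max, ENNReal.ofReal_zero, max_zero, max_zero,
    min_comm y, max_comm x, min_comm y', max_comm x']

lemma toReal_volume_Icc_prod_inter (u v x y u' v' x' y' : ℝ) :
    (volume ((Icc u v ×ˢ Icc u' v') ∩ (Icc x y ×ˢ Icc x' y'))).toReal =
      overlap u v x y * overlap u' v' x' y' := by
  rw [volume_Icc_prod_inter, ENNReal.toReal_mul, ENNReal.toReal_ofReal (overlap_nonneg ..),
    ENNReal.toReal_ofReal (overlap_nonneg ..)]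

lemma overlap_cells_of_ne {j j' : ℕ} (h : j ≠ j') (N : ℕ) :
    overlap (j / N) ((j + 1) / N) (j' / N) ((j' + 1) / N) = 0 := by
  have cell_le {k k' : ℕ} (hk : k < k') : ((k : ℝ) + 1) / N ≤ k' / N :=
    div_le_div_of_nonneg_right (by exact_mod_cast hk) N.cast_nonneg
  refine overlap_eq_zero_of_le ?_
  rcases h.lt_or_gt with hj | hj
  · exact (min_le_right _ _).trans ((cell_le hj).trans (le_max_left _ _))
  · exact (min_le_left _ _).trans ((cell_le hj).trans (le_max_right _ _))

lemma toReal_unitSquare_Icc_prod (a b c d : ℝ) :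
    (volume.restrict (Icc 0 1 ×ˢ Icc 0 1) (Icc a b ×ˢ Icc c d)).toReal =
      overlap 0 1 a b * overlap 0 1 c d := by
  rw [Measure.restrict_apply (measurableSet_Icc.prod measurableSet_Icc), inter_comm,
    toReal_volume_Icc_prod_inter]

lemma toReal_hatPerm_Icc_prod (N : ℕ) (π : Equiv.Perm (Fin N)) (a b c d : ℝ) :
    (hatPerm N π (Icc a b ×ˢ Icc c d)).toReal =
      ∑ j : Fin N, N * (overlap ((j : ℕ) / N) (((j : ℕ) + 1) / N) a b *
        overlap ((π j : ℕ) / N) (((π j : ℕ) + 1) / N) c d) := by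
  have hcell : ∀ j : Fin N, MeasurableSet ((Icc ((j : ℕ) / N : ℝ) (((j : ℕ) + 1) / N) ×ˢ
      Icc ((π j : ℕ) / N : ℝ) (((π j : ℕ) + 1) / N)) ∩ Icc a b ×ˢ Icc c d) := fun j =>
    (measurableSet_Icc.prod measurableSet_Icc).inter (measurableSet_Icc.prod measurableSet_Icc)
  rw [hatPerm, Measure.smul_apply, smul_eq_mul,
    Measure.restrict_apply (measurableSet_Icc.prod measurableSet_Icc), inter_comm, iUnion_inter,
    measure_iUnion₀ _ fun j => (hcell j).nullMeasurableSet, tsum_fintype, ENNReal.toReal_mul,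
    ENNReal.toReal_sum fun j _ => by
      rw [volume_Icc_prod_inter]
      exact ENNReal.mul_ne_top ENNReal.ofReal_ne_top ENNReal.ofReal_ne_top,
    Finset.mul_sum]
  · simp only [ENNReal.toReal_natCast, toReal_volume_Icc_prod_inter]
  · intro j j' hjj'
    refine measure_mono_null (inter_subset_inter inter_subset_left inter_subset_left) ?_
    rw [volume_Icc_prod_inter, overlap_cells_of_ne (Fin.val_injective.ne hjj'),
      ENNReal.ofReal_zero, zero_mul]

lemma overlap_add_left (t u v x y : ℝ) :
    overlap (t + u) (t + v) (t + x) (t + y) = overlap u v x y := by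
  rw [overlap, overlap, min_add_add_left, max_add_add_left, add_sub_add_left_eq_sub]

lemma overlap_div {p : ℝ} (hp : 0 < p) (u v x y : ℝ) :
    overlap (u / p) (v / p) (x / p) (y / p) = overlap u v x y / p := by
  rw [overlap, overlap, min_div_div_right hp.le, max_div_div_right hp.le, div_sub_div_same,
    ← max_div_div_right hp.le, zero_div]

lemma overlap_add_div {p : ℝ} (hp : 0 < p) (t u v x y : ℝ) :
    overlap ((t + u) / p) ((t + v) / p) x y = overlap u v (p * x - t) (p * y - t) / p := by
  calc overlap ((t + u) / p) ((t + v) / p) x y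
      = overlap ((t + u) / p) ((t + v) / p) (p * x / p) (p * y / p) := by
        rw [mul_div_cancel_left₀ _ hp.ne', mul_div_cancel_left₀ _ hp.ne']
    _ = overlap (t + u) (t + v) (t + (p * x - t)) (t + (p * y - t)) / p := by
        rw [overlap_div hp, add_sub_cancel, add_sub_cancel]
    _ = overlap u v (p * x - t) (p * y - t) / p := by rw [overlap_add_left]

lemma overlap_cell {p : ℝ} (hp : 0 < p) (t x y : ℝ) :
    overlap (t / p) ((t + 1) / p) x y = overlap 0 1 (p * x - t) (p * y - t) / p := by
  simpa using overlap_add_div hp t 0 1 x y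

lemma toReal_hatPerm_Icc_prod_eq_sum_unitSquare {m : ℕ} (σ : Equiv.Perm (Fin m)) (a b c d : ℝ) :
    (hatPerm m σ (Icc a b ×ˢ Icc c d)).toReal =
      ∑ i : Fin m, (volume.restrict (Icc 0 1 ×ˢ Icc 0 1)
        (Icc (m * a - (i : ℕ)) (m * b - (i : ℕ)) ×ˢ
          Icc (m * c - (σ i : ℕ)) (m * d - (σ i : ℕ)))).toReal / m := by
  rw [toReal_hatPerm_Icc_prod]
  refine Finset.sum_congr rfl fun i _ => ?_
  have hm' : (0 : ℝ) < m := Nat.cast_pos.2 i.pos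
  rw [toReal_unitSquare_Icc_prod, overlap_cell hm', overlap_cell hm']
  field_simp

lemma inflate_finProdFinEquiv {m n : ℕ} (σ : Equiv.Perm (Fin m)) (τ : Equiv.Perm (Fin n))
    (i : Fin m) (k : Fin n) :
    inflate σ τ (finProdFinEquiv (i, k)) = finProdFinEquiv (σ i, τ k) := by
  simp [inflate, Equiv.permCongr_apply]

lemma toReal_hatPerm_inflate_Icc_prod {m n : ℕ} (σ : Equiv.Perm (Fin m)) (τ : Equiv.Perm (Fin n))
    (a b c d : ℝ) :
    (hatPerm (m * n) (inflate σ τ) (Icc a b ×ˢ Icc c d)).toReal =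
      ∑ i : Fin m, (hatPerm n τ
        (Icc (m * a - (i : ℕ)) (m * b - (i : ℕ)) ×ˢ
          Icc (m * c - (σ i : ℕ)) (m * d - (σ i : ℕ)))).toReal / m := by
  have fine_cell (i : Fin m) (k : Fin n) (x y : ℝ) :
      overlap ((finProdFinEquiv (i, k) : ℕ) / (m * n : ℕ))
          (((finProdFinEquiv (i, k) : ℕ) + 1) / (m * n : ℕ)) x y =
        overlap ((k : ℕ) / n) (((k : ℕ) + 1) / n) (m * x - (i : ℕ)) (m * y - (i : ℕ)) / m := by
    have hm' : (0 : ℝ) < m := Nat.cast_pos.2 i.pos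
    have hn' : (0 : ℝ) < n := Nat.cast_pos.2 k.pos
    rw [← overlap_add_div hm']
    congr 1 <;> simp only [finProdFinEquiv_apply_val] <;> push_cast <;> field_simp <;> ring
  rw [toReal_hatPerm_Icc_prod, ← Equiv.sum_comp finProdFinEquiv, Fintype.sum_prod_type]
  refine Finset.sum_congr rfl fun i _ => ?_
  rw [toReal_hatPerm_Icc_prod, Finset.sum_div]
  refine Finset.sum_congr rfl fun k _ => ?_
  have hm' : (0 : ℝ) < m := Nat.cast_pos.2 i.pos
  rw [inflate_finProdFinEquiv, fine_cell, fine_cell]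
  push_cast
  field_simp

lemma overlap_of_not_mem_Ioo {u v x y : ℝ} (hu : 0 ≤ u) (huv : u ≤ v) (hv : v ≤ 1)
    (hx : x ∉ Ioo 0 1) (hy : y ∉ Ioo 0 1) : overlap u v x y = (v - u) * overlap 0 1 x y := by
  rw [mem_Ioo, not_and_or, not_lt, not_lt] at hx hy
  rcases le_or_gt y 0 with hy0 | hy0
  · rw [overlap_eq_zero_of_le ((min_le_left _ _).trans (hy0.trans (le_max_right _ _))),
      overlap_eq_zero_of_le ((min_le_left _ _).trans (hy0.trans (hu.trans (le_max_right _ _)))),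
      mul_zero]
  have hy1 : 1 ≤ y := hy.resolve_left hy0.not_ge
  rcases le_or_gt x 0 with hx0 | hx0
  · rw [overlap, overlap, min_eq_right (hv.trans hy1), min_eq_right hy1,
      max_eq_right (hx0.trans hu), max_eq_right hx0, max_eq_left (sub_nonneg.2 huv)]
    norm_num
  have hx1 : 1 ≤ x := hx.resolve_left hx0.not_ge
  rw [overlap_eq_zero_of_le ((min_le_right _ _).trans (hx1.trans (le_max_left _ _))),
    overlap_eq_zero_of_le ((min_le_right _ _).trans (hv.trans (hx1.trans (le_max_left _ _)))),
    mul_zero]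

lemma overlap_cell_of_not_mem_Ioo {n : ℕ} (k : Fin n) {x y : ℝ} (hx : x ∉ Ioo 0 1)
    (hy : y ∉ Ioo 0 1) : overlap ((k : ℕ) / n) (((k : ℕ) + 1) / n) x y = overlap 0 1 x y / n := by
  have hn : (0 : ℝ) < n := Nat.cast_pos.2 k.pos
  rw [overlap_of_not_mem_Ioo (by positivity) (by gcongr; linarith) ?_ hx hy]
  · field_simp
    ring
  · rw [div_le_one hn]
    exact_mod_cast k.isLt

lemma toReal_hatPerm_Icc_prod_of_not_mem_Ioo {n : ℕ} (hn : 0 < n) (τ : Equiv.Perm (Fin n))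
    {a b c d : ℝ} (ha : a ∉ Ioo 0 1) (hb : b ∉ Ioo 0 1) (hc : c ∉ Ioo 0 1) (hd : d ∉ Ioo 0 1) :
    (hatPerm n τ (Icc a b ×ˢ Icc c d)).toReal =
      (volume.restrict (Icc 0 1 ×ˢ Icc 0 1) (Icc a b ×ˢ Icc c d)).toReal := by
  have hn' : (0 : ℝ) < n := Nat.cast_pos.2 hn
  simp only [toReal_hatPerm_Icc_prod, toReal_unitSquare_Icc_prod,
    overlap_cell_of_not_mem_Ioo _ ha hb, overlap_cell_of_not_mem_Ioo _ hc hd,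
    Finset.sum_const, Finset.card_univ, Fintype.card_fin, nsmul_eq_mul]
  field_simp

instance (n : ℕ) (τ : Equiv.Perm (Fin n)) : IsFiniteMeasure (hatPerm n τ) :=
  ⟨by
    rw [hatPerm, Measure.smul_apply, Measure.restrict_apply_univ, smul_eq_mul]
    exact ENNReal.mul_lt_top (ENNReal.natCast_lt_top n)
      (isCompact_iUnion fun _ => isCompact_Icc.prod isCompact_Icc).measure_lt_top⟩

lemma abs_sub_le_dRect (μ ν : Measure (ℝ × ℝ)) [IsFiniteMeasure μ] [IsFiniteMeasure ν]
    (a b c d : ℝ) :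
    |(μ (Icc a b ×ˢ Icc c d)).toReal - (ν (Icc a b ×ˢ Icc c d)).toReal| ≤ dRect μ ν := by
  refine le_ciSup (f := fun r : ℝ × ℝ × ℝ × ℝ =>
      |(μ (Icc r.1 r.2.1 ×ˢ Icc r.2.2.1 r.2.2.2)).toReal -
        (ν (Icc r.1 r.2.1 ×ˢ Icc r.2.2.1 r.2.2.2)).toReal|) ⟨(μ univ).toReal + (ν univ).toReal, ?_⟩
    (a, b, c, d)
  rintro _ ⟨r, rfl⟩
  have hμ := ENNReal.toReal_mono (measure_ne_top μ univ) (measure_mono (subset_univ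
    (Icc r.1 r.2.1 ×ˢ Icc r.2.2.1 r.2.2.2)))
  have hν := ENNReal.toReal_mono (measure_ne_top ν univ) (measure_mono (subset_univ
    (Icc r.1 r.2.1 ×ˢ Icc r.2.2.1 r.2.2.2)))
  exact (abs_sub _ _).trans (add_le_add ((abs_of_nonneg ENNReal.toReal_nonneg).trans_le hμ)
    ((abs_of_nonneg ENNReal.toReal_nonneg).trans_le hν))

lemma card_filter_sub_mem_Ioo_le_one {ι : Type*} [Fintype ι] {g : ι → ℕ}
    (hg : Function.Injective g) (x : ℝ) :
    #{i | x - g i ∈ Ioo 0 1} ≤ 1 := by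
  refine Finset.card_le_one.2 fun i hi j hj => hg ?_
  simp only [Finset.mem_filter, Finset.mem_univ, true_and, mem_Ioo, sub_pos] at hi hj
  have h1 : (g i : ℝ) < g j + 1 := by linarith
  have h2 : (g j : ℝ) < g i + 1 := by linarith
  norm_cast at h1 h2
  omega

lemma abs_sum_le_card_mul {ι : Type*} [Fintype ι] {f : ι → ℝ} {s : Finset ι} {D : ℝ}
    (hf : ∀ i ∉ s, f i = 0) (hD : ∀ i ∈ s, |f i| ≤ D) : |∑ i, f i| ≤ #s * D := by
  rw [← Finset.sum_subset (Finset.subset_univ s) fun i _ hi => hf i hi, ← nsmul_eq_mul]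
  exact (Finset.abs_sum_le_sum_abs _ _).trans (Finset.sum_le_card_nsmul _ _ _ hD)

theorem dRect_hatPerm_inflate_le {m n : ℕ} (hn : 0 < n)
    (σ : Equiv.Perm (Fin m)) (τ : Equiv.Perm (Fin n)) :
    dRect (hatPerm m σ) (hatPerm (m * n) (inflate σ τ)) ≤
      4 * dRect (volume.restrict (Icc 0 1 ×ˢ Icc 0 1)) (hatPerm n τ) / m := by
  set unitSq : Measure (ℝ × ℝ) := volume.restrict (Icc 0 1 ×ˢ Icc 0 1)
  have : IsFiniteMeasure unitSq :=
    isFiniteMeasure_restrict.2 (isCompact_Icc.prod isCompact_Icc).measure_ne_top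
  have hD : 0 ≤ dRect unitSq (hatPerm n τ) :=
    (abs_nonneg _).trans (abs_sub_le_dRect unitSq (hatPerm n τ) 0 0 0 0)
  refine Real.iSup_le (fun ⟨a, b, c, d⟩ => ?_) (by positivity)
  rw [toReal_hatPerm_Icc_prod_eq_sum_unitSquare, toReal_hatPerm_inflate_Icc_prod,
    ← Finset.sum_sub_distrib]
  set cut : Finset (Fin m) := {i | m * a - (i : ℕ) ∈ Ioo 0 1 ∨ m * b - (i : ℕ) ∈ Ioo 0 1 ∨
    m * c - (σ i : ℕ) ∈ Ioo 0 1 ∨ m * d - (σ i : ℕ) ∈ Ioo 0 1}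
  have hcut : #cut ≤ 4 := by
    have hval := card_filter_sub_mem_Ioo_le_one (Fin.val_injective (n := m))
    have hσ := card_filter_sub_mem_Ioo_le_one (Fin.val_injective.comp σ.injective)
    simp only [cut, Finset.filter_or]
    refine (Finset.card_union_le _ _).trans (add_le_add (hval _) <|
      (Finset.card_union_le _ _).trans (add_le_add (hval _) <|
        (Finset.card_union_le _ _).trans (add_le_add (hσ _) (hσ _))))
  calc _ ≤ #cut * (dRect unitSq (hatPerm n τ) / m) := by
        refine abs_sum_le_card_mul (fun i hi => ?_) (fun i _ => ?_)
        · simp only [cut, Finset.mem_filter, Finset.mem_univ, true_and, not_or] at hi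
          rw [toReal_hatPerm_Icc_prod_of_not_mem_Ioo hn τ hi.1 hi.2.1 hi.2.2.1 hi.2.2.2, sub_self]
        · rw [← sub_div, abs_div, Nat.abs_cast]
          gcongr
          exact abs_sub_le_dRect _ _ _ _ _ _
    _ ≤ 4 * (dRect unitSq (hatPerm n τ) / m) := by gcongr; exact_mod_cast hcut
    _ = 4 * dRect unitSq (hatPerm n τ) / m := mul_div_assoc _ _ _ |>.symm

theorem inflation_distance_general (m n : ℕ) (hn : 2 ≤ n) (C : ℝ)
    (σ : Equiv.Perm (Fin m)) (τ : Equiv.Perm (Fin n))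
    (hτ : dRect (volume.restrict (Icc 0 1 ×ˢ Icc 0 1)) (hatPerm n τ) ≤
      C * Real.log n / n) :
    dRect (hatPerm m σ) (hatPerm (m * n) (inflate σ τ)) ≤
      4 * C * Real.log n / (m * n) := by
  calc _ ≤ 4 * dRect (volume.restrict (Icc 0 1 ×ˢ Icc 0 1)) (hatPerm n τ) / m :=
        dRect_hatPerm_inflate_le (by omega) σ τ
    _ ≤ 4 * (C * Real.log n / n) / m := by gcongr
    _ = 4 * C * Real.log n / (m * n) := by ring

theorem inflation_distance (m n : ℕ) (hm : 0 < m) (hn : 2 ≤ n) (C : ℝ) (hC : 0 < C)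
    (σ : Equiv.Perm (Fin m)) (τ : Equiv.Perm (Fin n))
    (hτ : dRect (volume.restrict (Icc 0 1 ×ˢ Icc 0 1)) (hatPerm n τ) ≤
      C * Real.log n / n) :
    dRect (hatPerm m σ) (hatPerm (m * n) (inflate σ τ)) ≤
      4 * C * Real.log n / (m * n) :=
  inflation_distance_general m n hn C σ τ hτ
end

section
/- Let 0 < r < 1/2 and let (Q_n)_{n≥n₀} be a nested sequence of axis-aligned squares in [0,1]² with x-projections [a_n, b_n] satisfying for all n ≥ n₀: (I) a_{n+1} > a_n + r(b_n − a_n) and b_{n+1} < b_n − r(b_n − a_n), and (II) b_{n+1} − a_{n+1} > r(b_n − a_n). Let f be a function whose graph is contained in ⋃ over the levels: for each n, every point (x,f(x)) with x ∈ [a_n, b_n] ∩ dom(f) satisfies f(x) ∈ Pr_y(Q_n). Let x* = ⋂_n [a_n, b_n] (a single point). Then f is Lipschitz at x*: there is L > 0 (one may take L = 1/r²) with |f(x) − f(x*)| ≤ L|x − x*| for all x ∈ dom(f) in [a_{n₀}, b_{n₀}]. -/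
open MeasureTheory Set Filter Topology

theorem nested_squares_lipschitz (r : ℝ) (hr0 : 0 < r) (hr : r < 1 / 2)
    (a b c : ℕ → ℝ) (hab : ∀ n, a n < b n)
    (hnestx : ∀ n, a n + r * (b n - a n) < a (n + 1) ∧
      b (n + 1) < b n - r * (b n - a n))
    (hsize : ∀ n, r * (b n - a n) < b (n + 1) - a (n + 1))
    (hnesty : ∀ n, Icc (c (n + 1)) (c (n + 1) + (b (n + 1) - a (n + 1))) ⊆
      Icc (c n) (c n + (b n - a n)))
    (dom : Set ℝ) (f : ℝ → ℝ)
    (hgraph : ∀ n, ∀ x ∈ dom ∩ Icc (a n) (b n),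
      f x ∈ Icc (c n) (c n + (b n - a n)))
    (xs : ℝ) (hxs : ∀ n, xs ∈ Icc (a n) (b n)) (hxsdom : xs ∈ dom) :
    ∀ x ∈ dom ∩ Icc (a 0) (b 0), |f x - f xs| ≤ (1 / r ^ 2) * |x - xs| := by
  classical
  rintro x ⟨hxdom, hx0⟩
  rcases eq_or_ne x xs with h | h
  · simp [h]
  have hε : 0 < |x - xs| := abs_pos.mpr (sub_ne_zero.mpr h)
  have hr2 : (0:ℝ) < r ^ 2 := by positivity
  -- geometric decay of lengths
  have hdecay : ∀ n, b n - a n ≤ (1 - 2*r)^n * (b 0 - a 0) := by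
    intro n
    induction n with
    | zero => simp
    | succ k ih =>
      have h1 := (hnestx k).1
      have h2 := (hnestx k).2
      have hpow : (0:ℝ) ≤ (1 - 2*r) := by linarith
      calc b (k+1) - a (k+1) ≤ (1 - 2*r) * (b k - a k) := by nlinarith
        _ ≤ (1 - 2*r) * ((1 - 2*r)^k * (b 0 - a 0)) :=
            mul_le_mul_of_nonneg_left ih hpow
        _ = (1 - 2*r)^(k+1) * (b 0 - a 0) := by ring
  have htend : Tendsto (fun n => (1 - 2*r)^n * (b 0 - a 0)) atTop (𝓝 0) := by
    have := (tendsto_pow_atTop_nhds_zero_of_lt_one (by linarith) (by linarith :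
      (1 - 2*r) < 1)).mul_const (b 0 - a 0)
    simpa using this
  obtain ⟨N, hN⟩ := (htend.eventually (gt_mem_nhds hε)).exists
  -- minimal m with x ∉ Icc (a m) (b m)
  have hPN : x ∉ Icc (a N) (b N) := by
    intro hmem
    have h1 := hmem.1; have h2 := hmem.2
    have h3 := (hxs N).1; have h4 := (hxs N).2
    have hd := hdecay N
    have : |x - xs| ≤ b N - a N := by
      rw [abs_sub_le_iff]; constructor <;> linarith
    linarith
  have hex : ∃ m, x ∉ Icc (a m) (b m) := ⟨N, hPN⟩
  have hm0 : Nat.find hex ≠ 0 := by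
    intro h0
    exact Nat.find_spec hex (h0 ▸ hx0)
  obtain ⟨n, hn⟩ : ∃ n, Nat.find hex = n + 1 :=
    ⟨Nat.find hex - 1, (Nat.succ_pred_eq_of_ne_zero hm0).symm⟩
  have hmspec : x ∉ Icc (a (n + 1)) (b (n + 1)) := hn ▸ Nat.find_spec hex
  have hxn : x ∈ Icc (a n) (b n) := by
    by_contra hc
    exact Nat.find_min hex (by omega : n < Nat.find hex) hc
  -- bound on |f x - f xs|
  have hf1 := hgraph n x ⟨hxdom, hxn⟩
  have hf2 := hgraph n xs ⟨hxsdom, hxs n⟩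
  have hfb : |f x - f xs| ≤ b n - a n := by
    rw [abs_sub_le_iff]
    constructor <;> [skip; skip] <;>
      · have := hf1.1; have := hf1.2; have := hf2.1; have := hf2.2; linarith
  -- lower bound on |x - xs|
  have key : r ^ 2 * (b n - a n) < |x - xs| := by
    have hs := hsize n
    have hlen1 : 0 < b (n+1) - a (n+1) := by have := hab (n+1); linarith
    rcases lt_or_ge x (a (n+1)) with hlt | hge
    · -- x < a (n+1)
      have hxs2 := (hxs (n+2)).1
      have h1 := (hnestx (n+1)).1
      have : r ^ 2 * (b n - a n) < xs - x := by nlinarith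
      calc r ^ 2 * (b n - a n) < xs - x := this
        _ ≤ |x - xs| := by rw [abs_sub_comm]; exact le_abs_self _
    · -- x > b (n+1)
      have hgt : b (n+1) < x := lt_of_not_ge fun hle => hmspec ⟨hge, hle⟩
      have hxs2 := (hxs (n+2)).2
      have h2 := (hnestx (n+1)).2
      have : r ^ 2 * (b n - a n) < x - xs := by nlinarith
      calc r ^ 2 * (b n - a n) < x - xs := this
        _ ≤ |x - xs| := le_abs_self _
  have : b n - a n ≤ (1 / r ^ 2) * |x - xs| := by
    rw [one_div, inv_mul_eq_div, le_div_iff₀ hr2]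
    nlinarith
  linarith
end
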